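/- Let H_T, H_t ∈ ℝ^{n×n} be positive semidefinite with H_t ≼ H_T (i.e., H_T − H_t positive semidefinite), and let Π₀ ∈ ℝ^{n×n}. If the operator norm of H_T^{1/2} Π₀ H_T^{1/2} is strictly less than 1, then the operator norm of H_t^{1/2} Π₀ H_t^{1/2} is strictly less than 1. -/

import Mathlib

/-!
For a positive semidefinite `X` with square root `S_X` we have `‖S_X v‖² = ⟪v, X v⟫`, so
`H_t ≼ H_T` gives `‖S_t v‖ ≤ ‖S_T v‖` for every vector and hence `‖S_t C‖ ≤ ‖S_T C‖` for every
matrix `C`. Replacing the square roots one at a time, and transposing in between (which preserves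
the spectral norm), gives
`‖S_t Π₀ S_t‖ ≤ ‖S_T Π₀ S_t‖ = ‖S_t Π₀ᵀ S_T‖ ≤ ‖S_T Π₀ᵀ S_T‖ = ‖S_T Π₀ S_T‖ < 1`.
-/

open Matrix

namespace Matrix.PosSemidef

open scoped ComplexOrder

/-- The positive semidefinite square root of a positive semidefinite matrix (as in the older Mathlib). -/
noncomputable def sqrt {n : Type*} [Fintype n] [DecidableEq n] {𝕜 : Type*} [RCLike 𝕜]
    {A : Matrix n n 𝕜} (hA : PosSemidef A) : Matrix n n 𝕜 :=
  hA.1.eigenvectorUnitary.1 * diagonal ((↑) ∘ (√·) ∘ hA.1.eigenvalues) *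
  (star hA.1.eigenvectorUnitary : Matrix n n 𝕜)

end Matrix.PosSemidef

open scoped ComplexOrder

namespace Matrix.PosSemidef

variable {n 𝕜 : Type*} [Fintype n] [DecidableEq n] [RCLike 𝕜] {A B : Matrix n n 𝕜}

lemma sqrt_eq_cfc (hA : A.PosSemidef) : hA.sqrt = cfc Real.sqrt A :=
  (hA.1.cfc_eq _).symm

lemma isHermitian_sqrt (hA : A.PosSemidef) : hA.sqrt.IsHermitian := by
  rw [sqrt_eq_cfc]
  exact cfc_predicate _ _

lemma sqrt_mul_sqrt (hA : A.PosSemidef) : hA.sqrt * hA.sqrt = A := by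
  have hspec : ∀ x ∈ spectrum ℝ A, 0 ≤ x := by
    intro x hx
    obtain ⟨i, rfl⟩ := hA.1.spectrum_real_eq_range_eigenvalues ▸ hx
    exact hA.eigenvalues_nonneg i
  calc hA.sqrt * hA.sqrt = cfc (fun x ↦ √x * √x) A := by rw [sqrt_eq_cfc, cfc_mul ..]
    _ = cfc id A := cfc_congr fun x hx ↦ Real.mul_self_sqrt (hspec x hx)
    _ = A := cfc_id ℝ A hA.isHermitian

end Matrix.PosSemidef

namespace Matrix

open scoped Norms.L2Operator InnerProductSpace
open ContinuousLinearMap RCLike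

variable {n 𝕜 : Type*} [Fintype n] [DecidableEq n] [RCLike 𝕜] {A B : Matrix n n 𝕜}

lemma PosSemidef.norm_toEuclideanCLM_sqrt_apply_sq (hA : A.PosSemidef) (x : EuclideanSpace 𝕜 n) :
    ‖toEuclideanCLM (𝕜 := 𝕜) hA.sqrt x‖ ^ 2 = re ⟪x, toEuclideanCLM (𝕜 := 𝕜) A x⟫_𝕜 := by
  rw [apply_norm_sq_eq_inner_adjoint_right, ← star_eq_adjoint, ← map_star,
    hA.isHermitian_sqrt.star_eq, ← mul_def, ← map_mul, hA.sqrt_mul_sqrt]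

lemma PosSemidef.norm_toEuclideanCLM_sqrt_apply_le (hA : A.PosSemidef) (hB : B.PosSemidef)
    (hAB : (B - A).PosSemidef) (x : EuclideanSpace 𝕜 n) :
    ‖toEuclideanCLM (𝕜 := 𝕜) hA.sqrt x‖ ≤ ‖toEuclideanCLM (𝕜 := 𝕜) hB.sqrt x‖ := by
  have hquad : 0 ≤ re ⟪x, toEuclideanCLM (𝕜 := 𝕜) (B - A) x⟫_𝕜 :=
    (isPositive_toEuclideanLin_iff.mpr hAB).re_inner_nonneg_right x
  rw [map_sub, _root_.sub_apply, inner_sub_right, map_sub] at hquad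
  refine (pow_le_pow_iff_left₀ (norm_nonneg _) (norm_nonneg _) two_ne_zero).mp ?_
  rw [hA.norm_toEuclideanCLM_sqrt_apply_sq, hB.norm_toEuclideanCLM_sqrt_apply_sq]
  linarith

lemma PosSemidef.l2_opNorm_sqrt_mul_le (hA : A.PosSemidef) (hB : B.PosSemidef)
    (hAB : (B - A).PosSemidef) (C : Matrix n n 𝕜) : ‖hA.sqrt * C‖ ≤ ‖hB.sqrt * C‖ := by
  simp only [← l2_opNorm_toEuclideanCLM, map_mul]
  exact opNorm_le_bound _ (norm_nonneg _) fun x ↦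
    (hA.norm_toEuclideanCLM_sqrt_apply_le hB hAB _).trans
      ((toEuclideanCLM (𝕜 := 𝕜) hB.sqrt * toEuclideanCLM (𝕜 := 𝕜) C).le_opNorm x)

lemma PosSemidef.l2_opNorm_sqrt_mul_mul_sqrt_le (hA : A.PosSemidef) (hB : B.PosSemidef)
    (hAB : (B - A).PosSemidef) (P : Matrix n n 𝕜) :
    ‖hA.sqrt * P * hA.sqrt‖ ≤ ‖hB.sqrt * P * hB.sqrt‖ := by
  have hSA := hA.isHermitian_sqrt.eq
  have hSB := hB.isHermitian_sqrt.eq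
  calc ‖hA.sqrt * P * hA.sqrt‖ ≤ ‖hB.sqrt * (P * hA.sqrt)‖ := by
        rw [mul_assoc]; exact hA.l2_opNorm_sqrt_mul_le hB hAB _
    _ = ‖hA.sqrt * Pᴴ * hB.sqrt‖ := by
        rw [← l2_opNorm_conjTranspose, conjTranspose_mul, conjTranspose_mul, hSA, hSB, mul_assoc]
    _ ≤ ‖hB.sqrt * (Pᴴ * hB.sqrt)‖ := by
        rw [mul_assoc]; exact hA.l2_opNorm_sqrt_mul_le hB hAB _
    _ = ‖hB.sqrt * P * hB.sqrt‖ := by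
        rw [← l2_opNorm_conjTranspose, conjTranspose_mul, conjTranspose_mul, hSB,
          conjTranspose_conjTranspose, mul_assoc]

end Matrix

/-- If `0 ⪯ H_t ⪯ H_T` and the spectral norm of `H_T^{1/2} Π₀ H_T^{1/2}` is less than one,
then the spectral norm of `H_t^{1/2} Π₀ H_t^{1/2}` is less than one. -/
theorem stmt10 {n : ℕ} (HT Ht Pi0 : Matrix (Fin n) (Fin n) ℝ)
    (hHT : HT.PosSemidef) (hHt : Ht.PosSemidef) (hle : (HT - Ht).PosSemidef)
    (hnorm : ‖Matrix.toEuclideanCLM (𝕜 := ℝ) (hHT.sqrt * Pi0 * hHT.sqrt)‖ < 1) :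
    ‖Matrix.toEuclideanCLM (𝕜 := ℝ) (hHt.sqrt * Pi0 * hHt.sqrt)‖ < 1 :=
  (hHt.l2_opNorm_sqrt_mul_mul_sqrt_le hHT hle Pi0).trans_lt hnorm
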